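/- arXiv:1606.07587 — 2 statements merged into one kernel-verified Lean document; each statement's English description precedes it below -/
import Mathlib

section
/- For every ξ on the unit circle with ξ ≠ 1, the characteristic function of the second-order backward difference formula, δ(ξ) = 3/2 - 2ξ + ξ²/2, has strictly positive real part. -/
namespace Complex

theorem re_sq_of_norm_eq_one {z : ℂ} (hz : ‖z‖ = 1) : (z ^ 2).re = 2 * z.re ^ 2 - 1 := by
  have hsq : z.re * z.re + z.im * z.im = 1 := by
    rw [← normSq_apply, normSq_eq_norm_sq, hz, one_pow]
  rw [sq z, mul_re, sq]
  linarith

theorem re_lt_one_of_norm_eq_one {z : ℂ} (hz : ‖z‖ = 1) (hne : z ≠ 1) : z.re < 1 := by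
  refine (re_le_norm z).trans_eq hz |>.lt_of_ne fun hre => hne ?_
  have him : z.im = 0 := abs_re_eq_norm.mp (by rw [hre, hz, abs_one])
  exact ext hre him

end Complex

theorem bdf2_symbol_positive_real_part (ξ : ℂ) (hξ : ‖ξ‖ = 1) (hne : ξ ≠ 1) :
    0 < (3/2 - 2*ξ + ξ^2/2).re := by
  have hre : (3/2 - 2*ξ + ξ^2/2).re = (1 - ξ.re) ^ 2 := by
    simp only [Complex.add_re, Complex.sub_re, Complex.div_ofNat_re, Complex.mul_re,
      Complex.re_sq_of_norm_eq_one hξ]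
    norm_num
    ring
  rw [hre]
  exact pow_pos (sub_pos.mpr (Complex.re_lt_one_of_norm_eq_one hξ hne)) 2
end

section
/- Let 0 < α < 1 and define δ(ξ) = (1-ξ)^α / (1 - α/2 + (α/2)ξ) (principal branch). Then for every ξ = e^{iθ} with θ ∈ (0, 2π), δ(ξ) lies in the open sector Σ_{απ/2} = {z ≠ 0 : |arg z| < απ/2}; moreover, arg δ(e^{iθ}) = -απ/2 + (α/2)θ - ψ(θ), where ψ(θ) = arg(1 - α/2 + (α/2)e^{iθ}), and (α/2)θ - ψ(θ) increases from 0 to απ as θ goes from 0 to 2π. -/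
open Complex Real

noncomputable def ffCN (α θ : ℝ) : ℝ := (α/2 * Real.sin θ) / (1 - α/2 + α/2 * Real.cos θ)
noncomputable def ssCN (α θ : ℝ) : ℝ := α/2 * θ - Real.arctan (ffCN α θ)

lemma dCN_pos {α : ℝ} (hα0 : 0 < α) (hα1 : α < 1) (θ : ℝ) :
    0 < 1 - α/2 + α/2 * Real.cos θ := by
  nlinarith [Real.neg_one_le_cos θ]

lemma ggCN_re (α θ : ℝ) :
    (1 - (α : ℂ) / 2 + ((α : ℂ) / 2) * Complex.exp (Complex.I * θ)).re
      = 1 - α/2 + α/2 * Real.cos θ := by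
  simp [Complex.exp_re, Complex.exp_im, Complex.add_re, Complex.mul_re]

lemma ggCN_im (α θ : ℝ) :
    (1 - (α : ℂ) / 2 + ((α : ℂ) / 2) * Complex.exp (Complex.I * θ)).im
      = α/2 * Real.sin θ := by
  simp [Complex.exp_re, Complex.exp_im, Complex.add_im, Complex.mul_im]

lemma arg_ggCN {α : ℝ} (hα0 : 0 < α) (hα1 : α < 1) (θ : ℝ) :
    (1 - (α : ℂ) / 2 + ((α : ℂ) / 2) * Complex.exp (Complex.I * θ)).arg
      = Real.arctan (ffCN α θ) := by
  set g : ℂ := 1 - (α : ℂ) / 2 + ((α : ℂ) / 2) * Complex.exp (Complex.I * θ) with hg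
  have hre : 0 < g.re := by rw [hg, ggCN_re]; exact dCN_pos hα0 hα1 θ
  have habs : |g.arg| < π/2 := Complex.abs_arg_lt_pi_div_two_iff.2 (Or.inl hre)
  rw [abs_lt] at habs
  have h := Real.arctan_tan habs.1 habs.2
  rw [Complex.tan_arg] at h
  rw [← h, hg, ggCN_re, ggCN_im, ffCN]

lemma ssCN_strictMono {α : ℝ} (hα0 : 0 < α) (hα1 : α < 1) :
    StrictMonoOn (ssCN α) (Set.Icc 0 (2*π)) := by
  have hcont : ContinuousOn (ssCN α) (Set.Icc 0 (2*π)) := by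
    apply ContinuousOn.sub (by fun_prop)
    apply Real.continuous_arctan.comp_continuousOn
    apply ContinuousOn.div (by fun_prop) (by fun_prop)
    intro x _; exact (dCN_pos hα0 hα1 x).ne'
  apply strictMonoOn_of_deriv_pos (convex_Icc _ _) hcont
  intro θ hθ
  rw [interior_Icc] at hθ
  set d : ℝ := 1 - α/2 + α/2 * Real.cos θ with hd
  have hdpos : 0 < d := dCN_pos hα0 hα1 θ
  have hN : HasDerivAt (fun θ => α/2 * Real.sin θ) (α/2 * Real.cos θ) θ :=
    (Real.hasDerivAt_sin θ).const_mul _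
  have hD : HasDerivAt (fun θ => 1 - α/2 + α/2 * Real.cos θ) (α/2 * -Real.sin θ) θ :=
    ((Real.hasDerivAt_cos θ).const_mul (α/2)).const_add _
  have hf : HasDerivAt (ffCN α)
      ((α/2 * Real.cos θ * d - α/2 * Real.sin θ * (α/2 * -Real.sin θ)) / d^2) θ :=
    hN.div hD hdpos.ne'
  have hs : HasDerivAt (ssCN α)
      (α/2 - (α/2 * Real.cos θ * d - α/2 * Real.sin θ * (α/2 * -Real.sin θ)) / d^2
        / (1 + ffCN α θ ^ 2)) θ := by
    have := ((hasDerivAt_id θ).const_mul (α/2)).sub hf.arctan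
    exact this.congr_deriv (by ring)
  rw [hs.deriv]
  have h1 : (0:ℝ) < 1 + ffCN α θ ^ 2 := by positivity
  rw [sub_pos, div_lt_iff₀ h1]
  have hcos1 : Real.cos θ < 1 := by
    have hs2 : 0 < Real.sin (θ/2) :=
      Real.sin_pos_of_pos_of_lt_pi (by linarith [hθ.1]) (by linarith [hθ.2])
    have h2 : Real.cos (2*(θ/2)) = Real.cos (θ/2)^2 - Real.sin (θ/2)^2 := Real.cos_two_mul' _
    have h3 : (2:ℝ)*(θ/2) = θ := by ring
    rw [h3] at h2
    nlinarith [Real.sin_sq_add_cos_sq (θ/2)]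
  have hsc := Real.sin_sq_add_cos_sq θ
  have key : d^2 + (α/2)^2*(Real.sin θ)^2 - Real.cos θ*d - (α/2)*(Real.sin θ)^2
      = (1-α/2)*(1-α)*(1-Real.cos θ) := by
    rw [hd]; nlinarith [hsc]
  rw [ffCN, div_pow, ← hd, div_lt_iff₀ (by positivity : (0:ℝ) < d^2)]
  have expand : α / 2 * (1 + (α / 2 * Real.sin θ) ^ 2 / d ^ 2) * d ^ 2
      = α/2 * (d^2 + (α/2)^2 * (Real.sin θ)^2) := by
    field_simp
  rw [expand]
  nlinarith [key, mul_pos (mul_pos (by linarith : (0:ℝ) < 1-α/2) (by linarith : (0:ℝ) < 1-α))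
    (by linarith : (0:ℝ) < 1 - Real.cos θ)]

/-- Factorization of `1 - e^{iθ}`. -/
lemma one_sub_exp_eq (θ : ℝ) :
    1 - Complex.exp (Complex.I * θ)
      = ((2 * Real.sin (θ/2) : ℝ) : ℂ) * Complex.exp (((θ/2 - π/2 : ℝ) : ℂ) * Complex.I) := by
  have hI : Complex.I * (θ:ℂ) = ((θ:ℝ) : ℂ) * Complex.I := by ring
  rw [hI]
  have h1 : Real.cos θ = Real.cos (θ/2)^2 - Real.sin (θ/2)^2 := by
    have := Real.cos_two_mul' (θ/2); rw [show 2*(θ/2) = θ by ring] at this; exact this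
  have h1' : Real.sin θ = 2 * Real.sin (θ/2) * Real.cos (θ/2) := by
    have := Real.sin_two_mul (θ/2); rw [show 2*(θ/2) = θ by ring] at this; exact this
  have h2 : Real.cos (θ/2 - π/2) = Real.sin (θ/2) := by
    rw [← Real.cos_neg, neg_sub, Real.cos_pi_div_two_sub]
  have h3 : Real.sin (θ/2 - π/2) = -Real.cos (θ/2) := by
    rw [show θ/2 - π/2 = -(π/2 - θ/2) by ring, Real.sin_neg, Real.sin_pi_div_two_sub]
  have h4 := Real.sin_sq_add_cos_sq (θ/2)
  apply Complex.ext
  · rw [Complex.sub_re, Complex.one_re, Complex.re_ofReal_mul,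
      Complex.exp_ofReal_mul_I_re, Complex.exp_ofReal_mul_I_re, h2]
    nlinarith
  · rw [Complex.sub_im, Complex.one_im, Complex.im_ofReal_mul,
      Complex.exp_ofReal_mul_I_im, Complex.exp_ofReal_mul_I_im, h3]
    nlinarith

lemma arg_ofReal_mul_exp {r φ : ℝ} (hr : 0 < r) (hφ : φ ∈ Set.Ioc (-π) π) :
    ((r:ℂ) * Complex.exp ((φ:ℝ) * Complex.I)).arg = φ := by
  rw [Complex.exp_mul_I]
  exact Complex.arg_mul_cos_add_sin_mul_I hr hφ

lemma ofReal_mul_exp_div {a A b ψ : ℝ} (hA : A ≠ 0) :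
    ((a:ℝ):ℂ) * Complex.exp (((b:ℝ):ℂ) * Complex.I)
        / (((A:ℝ):ℂ) * Complex.exp (((ψ:ℝ):ℂ) * Complex.I))
      = ((a/A : ℝ) : ℂ) * Complex.exp ((((b - ψ : ℝ)):ℂ) * Complex.I) := by
  have h : Complex.exp ((((b - ψ : ℝ)):ℂ) * Complex.I)
      = Complex.exp (((b:ℝ):ℂ) * Complex.I) / Complex.exp (((ψ:ℝ):ℂ) * Complex.I) := by
    rw [← Complex.exp_sub]; congr 1; push_cast; ring
  rw [h]
  have hA' : ((A:ℝ):ℂ) ≠ 0 := by exact_mod_cast hA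
  field_simp
  push_cast
  field_simp

/-- Fractional Crank--Nicolson symbol `δ(ξ) = (1-ξ)^α / (1-α/2+(α/2)ξ)` lies in the
open sector `Σ_{απ/2}` for `ξ = e^{iθ}`, `θ ∈ (0,2π)`, when `0<α<1`; its argument is
`-απ/2 + (α/2)θ - ψ(θ)` with `ψ(θ) = arg(1-α/2+(α/2)e^{iθ})`, and `(α/2)θ - ψ(θ)` is
monotone on `(0,2π)` with values in `(0, απ)`. -/
theorem crank_nicolson_symbol_in_sector (α : ℝ) (hα0 : 0 < α) (hα1 : α < 1) :
    (∀ θ ∈ Set.Ioo (0 : ℝ) (2 * π),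
      (1 - Complex.exp (Complex.I * θ)) ^ (α : ℂ)
          / (1 - (α : ℂ) / 2 + ((α : ℂ) / 2) * Complex.exp (Complex.I * θ)) ≠ 0 ∧
      |((1 - Complex.exp (Complex.I * θ)) ^ (α : ℂ)
          / (1 - (α : ℂ) / 2 + ((α : ℂ) / 2) * Complex.exp (Complex.I * θ))).arg|
        < α * π / 2 ∧
      ((1 - Complex.exp (Complex.I * θ)) ^ (α : ℂ)
          / (1 - (α : ℂ) / 2 + ((α : ℂ) / 2) * Complex.exp (Complex.I * θ))).arg
        = -(α * π / 2) + (α / 2) * θ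
          - (1 - (α : ℂ) / 2 + ((α : ℂ) / 2) * Complex.exp (Complex.I * θ)).arg ∧
      0 < (α / 2) * θ
          - (1 - (α : ℂ) / 2 + ((α : ℂ) / 2) * Complex.exp (Complex.I * θ)).arg ∧
      (α / 2) * θ
          - (1 - (α : ℂ) / 2 + ((α : ℂ) / 2) * Complex.exp (Complex.I * θ)).arg < α * π) ∧
    MonotoneOn (fun θ : ℝ =>
        (α / 2) * θ - (1 - (α : ℂ) / 2 + ((α : ℂ) / 2) * Complex.exp (Complex.I * θ)).arg)
      (Set.Ioo (0 : ℝ) (2 * π)) := by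
  have hpi := Real.pi_pos
  have hmono := ssCN_strictMono hα0 hα1
  constructor
  · intro θ hθ
    obtain ⟨hθ0, hθ2⟩ := hθ
    set g : ℂ := 1 - (α : ℂ) / 2 + ((α : ℂ) / 2) * Complex.exp (Complex.I * θ) with hgdef
    have hgre : 0 < g.re := by rw [hgdef, ggCN_re]; exact dCN_pos hα0 hα1 θ
    have hgne : g ≠ 0 := by intro h; rw [h] at hgre; simp at hgre
    have hψarctan : g.arg = Real.arctan (ffCN α θ) := arg_ggCN hα0 hα1 θ
    have hψ : |g.arg| < π/2 := Complex.abs_arg_lt_pi_div_two_iff.2 (Or.inl hgre)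
    rw [abs_lt] at hψ
    -- bounds on ssCN
    have hsθ1 : 0 < ssCN α θ := by
      have h0 : (0:ℝ) ∈ Set.Icc 0 (2*π) := ⟨le_refl _, by linarith⟩
      have hm : θ ∈ Set.Icc 0 (2*π) := ⟨hθ0.le, hθ2.le⟩
      have := hmono h0 hm hθ0
      simpa [ssCN, ffCN] using this
    have hsθ2 : ssCN α θ < α * π := by
      have h2 : (2*π) ∈ Set.Icc (0:ℝ) (2*π) := ⟨by linarith, le_refl _⟩
      have hm : θ ∈ Set.Icc 0 (2*π) := ⟨hθ0.le, hθ2.le⟩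
      have := hmono hm h2 hθ2
      have h2π : ssCN α (2*π) = α * π := by
        simp [ssCN, ffCN, Real.sin_two_pi]; ring
      linarith [h2π ▸ this]
    -- numerator factorization
    have hsin2 : 0 < Real.sin (θ/2) :=
      Real.sin_pos_of_pos_of_lt_pi (by linarith) (by linarith)
    set R : ℝ := 2 * Real.sin (θ/2) with hRdef
    have hR : 0 < R := by positivity
    have hz := one_sub_exp_eq θ
    have hzne : 1 - Complex.exp (Complex.I * θ) ≠ 0 := by
      rw [hz]
      exact mul_ne_zero (by exact_mod_cast hR.ne') (Complex.exp_ne_zero _)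
    have hφ0mem : θ/2 - π/2 ∈ Set.Ioc (-π) π := ⟨by linarith, by linarith⟩
    have hargz : (1 - Complex.exp (Complex.I * θ)).arg = θ/2 - π/2 := by
      rw [hz]; exact arg_ofReal_mul_exp hR hφ0mem
    have habsz : ‖1 - Complex.exp (Complex.I * θ)‖ = R := by
      rw [hz, norm_mul, Complex.norm_real, Complex.norm_exp_ofReal_mul_I, mul_one]
      rw [← hRdef, Real.norm_eq_abs, abs_of_pos hR]
    have hlog : Complex.log (1 - Complex.exp (Complex.I * θ))
        = ((Real.log R : ℝ) : ℂ) + ((θ/2 - π/2 : ℝ) : ℂ) * Complex.I := by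
      apply Complex.ext
      · simp [Complex.log_re, habsz]
      · simp [Complex.log_im, hargz]
    have hnum : (1 - Complex.exp (Complex.I * θ)) ^ (α:ℂ)
        = ((Real.exp (α * Real.log R) : ℝ) : ℂ)
            * Complex.exp (((α * (θ/2 - π/2) : ℝ) : ℂ) * Complex.I) := by
      rw [Complex.cpow_def_of_ne_zero hzne, hlog]
      rw [show ((((Real.log R : ℝ) : ℂ) + ((θ/2 - π/2 : ℝ) : ℂ) * Complex.I) * (α:ℂ))
          = ((α * Real.log R : ℝ) : ℂ) + ((α * (θ/2 - π/2) : ℝ) : ℂ) * Complex.I by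
        push_cast; ring]
      rw [Complex.exp_add, Complex.ofReal_exp]
    -- δ factorization
    have hA : (0:ℝ) < ‖g‖ := by
      simpa using (norm_pos_iff.mpr hgne)
    have hgfac : g = ((‖g‖ : ℝ) : ℂ) * Complex.exp (((g.arg : ℝ) : ℂ) * Complex.I) :=
      (Complex.norm_mul_exp_arg_mul_I g).symm
    have hδ : (1 - Complex.exp (Complex.I * θ)) ^ (α:ℂ) / g
        = ((Real.exp (α * Real.log R) / ‖g‖ : ℝ) : ℂ)
            * Complex.exp (((α * (θ/2 - π/2) - g.arg : ℝ) : ℂ) * Complex.I) := by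
      conv_lhs => rw [hnum, hgfac]
      exact ofReal_mul_exp_div hA.ne'
    have hargδ : ((1 - Complex.exp (Complex.I * θ)) ^ (α:ℂ) / g).arg
        = α * (θ/2 - π/2) - g.arg := by
      rw [hδ]
      apply arg_ofReal_mul_exp (by positivity)
      constructor
      · nlinarith [hψ.1, hψ.2]
      · nlinarith [hψ.1, hψ.2]
    have hψs : g.arg = Real.arctan (ffCN α θ) := hψarctan
    have hss : ssCN α θ = α/2 * θ - Real.arctan (ffCN α θ) := rfl
    refine ⟨?_, ?_, ?_, ?_, ?_⟩
    · apply div_ne_zero _ hgne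
      rw [Complex.cpow_def_of_ne_zero hzne]
      exact Complex.exp_ne_zero _
    · rw [hargδ, hψs]
      rw [abs_lt]
      constructor <;> [nlinarith [hsθ1]; nlinarith [hsθ2]]
    · rw [hargδ]; ring
    · rw [hψs]
      have : (α/2) * θ - Real.arctan (ffCN α θ) = ssCN α θ := by rw [hss]
      linarith [hsθ1, this]
    · rw [hψs]
      have : (α/2) * θ - Real.arctan (ffCN α θ) = ssCN α θ := by rw [hss]
      linarith [hsθ2, this]
  · intro a ha b hb hab
    have h := hmono.monotoneOn ⟨ha.1.le, ha.2.le⟩ ⟨hb.1.le, hb.2.le⟩ hab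
    simp only
    rw [arg_ggCN hα0 hα1 a, arg_ggCN hα0 hα1 b]
    simpa [ssCN] using h
end
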